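/- arXiv:1307.1737 — 2 statements merged into one kernel-verified Lean document; each statement's English description precedes it below -/
import Mathlib

section
/- Let X be a compact metric space and f : X → X a continuous map, let A be an attractor, and let A* = {x ∈ X : ω(x) ∩ A = ∅} be its dual repeller. A subset U ⊆ X is an attracting neighborhood with ω(U) = A if and only if U is a neighborhood of A (i.e. A ⊆ int(U)) and cl(U) ∩ A* = ∅. -/
open Set

/-- The maximal invariant set in `U`: the union of all subsets `S ⊆ U` with `f '' S = S`. -/
def MaxInv {Y : Type*} (f : Y → Y) (U : Set Y) : Set Y :=
  ⋃₀ {S : Set Y | S ⊆ U ∧ f '' S = S}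

/-- The maximal forward invariant set in `U`: the union of all subsets `S ⊆ U`
with `f '' S ⊆ S`. -/
def MaxInvPlus {Y : Type*} (f : Y → Y) (U : Set Y) : Set Y :=
  ⋃₀ {S : Set Y | S ⊆ U ∧ f '' S ⊆ S}

/-- The omega-limit set `ω(U) = ⋂_{n ≥ 0} cl (⋃_{m ≥ n} f^[m] '' U)`. -/
def OmegaLim {Y : Type*} [TopologicalSpace Y] (f : Y → Y) (U : Set Y) : Set Y :=
  ⋂ n : ℕ, closure (⋃ m ≥ n, f^[m] '' U)

/-- The alpha-limit set `α(U) = ⋂_{n ≥ 0} cl (⋃_{m ≥ n} (f^[m]) ⁻¹' U)`. -/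
def AlphaLim {Y : Type*} [TopologicalSpace Y] (f : Y → Y) (U : Set Y) : Set Y :=
  ⋂ n : ℕ, closure (⋃ m ≥ n, f^[m] ⁻¹' U)

/-- A trapping region: a forward invariant set `U` with `f^[n] '' cl U ⊆ int U`
for some `n ≥ 1`. -/
def IsTrappingRegion {Y : Type*} [TopologicalSpace Y] (f : Y → Y) (U : Set Y) : Prop :=
  f '' U ⊆ U ∧ ∃ n : ℕ, 1 ≤ n ∧ f^[n] '' closure U ⊆ interior U

/-- An attractor: `A = Inv(U)` for some trapping region `U`. -/
def IsAttractor {Y : Type*} [TopologicalSpace Y] (f : Y → Y) (A : Set Y) : Prop :=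
  ∃ U : Set Y, IsTrappingRegion f U ∧ A = MaxInv f U

/-- An attracting neighborhood: `ω(U) ⊆ int U`. -/
def IsAttractingNbhd {Y : Type*} [TopologicalSpace Y] (f : Y → Y) (U : Set Y) : Prop :=
  OmegaLim f U ⊆ interior U

/-- A repelling region: a backward invariant set `U` with `(f^[n]) ⁻¹' cl U ⊆ int U`
for some `n ≥ 1`. -/
def IsRepellingRegion {Y : Type*} [TopologicalSpace Y] (f : Y → Y) (U : Set Y) : Prop :=
  f ⁻¹' U ⊆ U ∧ ∃ n : ℕ, 1 ≤ n ∧ f^[n] ⁻¹' closure U ⊆ interior U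

/-- A repeller: `R = Inv⁺(U)` for some repelling region `U`. -/
def IsRepeller {Y : Type*} [TopologicalSpace Y] (f : Y → Y) (R : Set Y) : Prop :=
  ∃ U : Set Y, IsRepellingRegion f U ∧ R = MaxInvPlus f U

/-- A repelling neighborhood: `α(U) ⊆ int U`. -/
def IsRepellingNbhd {Y : Type*} [TopologicalSpace Y] (f : Y → Y) (U : Set Y) : Prop :=
  AlphaLim f U ⊆ interior U

/-- A backward orbit: a sequence `γ : ℕ → Y` with `f (γ (k+1)) = γ k` for all `k`.
A backward orbit through `x` additionally satisfies `γ 0 = x`. -/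
def IsBackwardOrbit {Y : Type*} (f : Y → Y) (γ : ℕ → Y) : Prop :=
  ∀ k : ℕ, f (γ (k + 1)) = γ k

/-- The orbital alpha-limit set `α_o(γ) = ⋂_{n ≥ 0} cl {γ m : m ≥ n}`. -/
def OrbAlpha {Y : Type*} [TopologicalSpace Y] (γ : ℕ → Y) : Set Y :=
  ⋂ n : ℕ, closure (γ '' {m : ℕ | n ≤ m})

/-- The dual repeller of an attractor `A`: `A* = {x : ω(x) ∩ A = ∅}`. -/
def DualRepeller {Y : Type*} [TopologicalSpace Y] (f : Y → Y) (A : Set Y) : Set Y :=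
  {x : Y | OmegaLim f {x} ∩ A = ∅}

/-- The dual attractor of a repeller `R`:
`R* = {x : ∃ backward orbit γ through x with α_o(γ) ∩ R = ∅}`. -/
def DualAttractor {Y : Type*} [TopologicalSpace Y] (f : Y → Y) (R : Set Y) : Set Y :=
  {x : Y | ∃ γ : ℕ → Y, γ 0 = x ∧ IsBackwardOrbit f γ ∧ OrbAlpha γ ∩ R = ∅}

/-!
Let `A = Inv(V)` for a trapping region `V`. Invariant subsets of `cl V` already lie in `int V`,
since `f^[n]` maps `cl V` into `int V`; in particular `A ⊆ int V`, and `ω(U)` is invariant because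
`X` is compact. If `ω(U) = A`, every `x ∈ cl U` has `∅ ≠ ω(x) ⊆ ω(cl U) = A`, so `x ∉ A*`.
Conversely, if `cl U` misses `A*`, the orbit of every `x ∈ cl U` accumulates on `A ⊆ int V`, hence
enters the open set `int V`; by compactness of `cl U` a single iterate `f^[N]` maps `cl U` into `V`.
Then `ω(U)` is an invariant subset of `cl V`, so it lies in `V` and thus in `Inv(V) = A`, while
`A ⊆ ω(U)` because `A` is an invariant subset of `U`.
-/

open Set Function

section

variable {Y : Type*} {f : Y → Y} {S U : Set Y}

theorem image_iterate_eq_of_image_eq (hS : f '' S = S) (n : ℕ) : f^[n] '' S = S := by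
  rw [image_iterate_eq]
  exact iterate_fixed hS n

theorem image_iterate_subset_of_image_subset (hS : f '' S ⊆ S) (n : ℕ) : f^[n] '' S ⊆ S :=
  ((mapsTo_iff_image_subset.2 hS).iterate n).image_subset

theorem image_iUnion_image_iterate_subset (f : Y → Y) (U : Set Y) :
    f '' ⋃ m, f^[m] '' U ⊆ ⋃ m, f^[m] '' U := by
  rw [image_iUnion]
  refine iUnion_mono' fun m => ⟨m + 1, ?_⟩
  rw [iterate_succ', image_comp]

theorem maxInv_subset : MaxInv f U ⊆ U :=
  sUnion_subset fun _ hS => hS.1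

theorem subset_maxInv (hSU : S ⊆ U) (hS : f '' S = S) : S ⊆ MaxInv f U :=
  subset_sUnion_of_mem ⟨hSU, hS⟩

theorem image_maxInv (f : Y → Y) (U : Set Y) : f '' MaxInv f U = MaxInv f U := by
  rw [MaxInv, image_sUnion, sUnion_image, sUnion_eq_biUnion]
  exact iUnion₂_congr fun _ hS => hS.2

end

theorem IsTrappingRegion.subset_interior {X : Type*} [TopologicalSpace X] {f : X → X}
    {V S : Set X} (hV : IsTrappingRegion f V) (hS : f '' S = S) (hSV : S ⊆ closure V) :
    S ⊆ interior V := by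
  obtain ⟨-, n, -, hn⟩ := hV
  calc S = f^[n] '' S := (image_iterate_eq_of_image_eq hS n).symm
    _ ⊆ f^[n] '' closure V := image_mono hSV
    _ ⊆ interior V := hn

theorem image_iInter_of_antitone {X Y : Type*} [TopologicalSpace X] [CompactSpace X]
    [TopologicalSpace Y] [T1Space Y] {f : X → Y} (hf : Continuous f) {K : ℕ → Set X}
    (hK : Antitone K) (hKc : ∀ n, IsClosed (K n)) : f '' ⋂ n, K n = ⋂ n, f '' K n := by
  refine (image_iInter_subset K f).antisymm fun y hy => ?_
  have hfib : (⋂ n, f ⁻¹' {y} ∩ K n).Nonempty := by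
    refine IsCompact.nonempty_iInter_of_directed_nonempty_isCompact_isClosed _
      (fun m n => ?_) (fun n => ?_) (fun n => ?_) (fun n => ?_)
    · exact ⟨max m n, inter_subset_inter_right _ (hK (le_max_left m n)),
        inter_subset_inter_right _ (hK (le_max_right m n))⟩
    · obtain ⟨x, hx, hxy⟩ := mem_iInter.1 hy n
      exact ⟨x, hxy, hx⟩
    · exact ((isClosed_singleton.preimage hf).inter (hKc n)).isCompact
    · exact (isClosed_singleton.preimage hf).inter (hKc n)
  obtain ⟨x, hx⟩ := hfib
  exact ⟨x, mem_iInter.2 fun n => (mem_iInter.1 hx n).2, (mem_iInter.1 hx 0).1⟩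

section OmegaLim

variable {X : Type*} [TopologicalSpace X] {f : X → X} {S U V : Set X}

theorem omegaLim_mono (h : U ⊆ V) : OmegaLim f U ⊆ OmegaLim f V :=
  iInter_mono fun _ => closure_mono (iUnion₂_mono fun _ _ => image_mono h)

theorem omegaLim_closure (hf : Continuous f) (U : Set X) :
    OmegaLim f (closure U) = OmegaLim f U := by
  refine (iInter_mono fun n => ?_).antisymm (omegaLim_mono subset_closure)
  refine closure_minimal (iUnion₂_subset fun m hm => ?_) isClosed_closure
  exact (image_closure_subset_closure_image (hf.iterate m)).trans
    (closure_mono (subset_iUnion₂ (s := fun m _ => f^[m] '' U) m hm))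

theorem subset_omegaLim (hSU : S ⊆ U) (hS : f '' S = S) : S ⊆ OmegaLim f U := fun x hx =>
  mem_iInter.2 fun n => subset_closure <| mem_iUnion₂.2
    ⟨n, le_rfl, image_mono hSU (by rwa [image_iterate_eq_of_image_eq hS n])⟩

theorem omegaLim_subset_closure (hV : f '' V ⊆ V) {N : ℕ} (hN : f^[N] '' U ⊆ V) :
    OmegaLim f U ⊆ closure V := by
  refine (iInter_subset _ N).trans (closure_mono (iUnion₂_subset fun m hm => ?_))
  rw [← Nat.sub_add_cancel hm, iterate_add, image_comp]
  exact (image_mono hN).trans (image_iterate_subset_of_image_subset hV _)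

theorem exists_iterate_mem_of_omegaLim_inter_nonempty {x : X} (hV : IsOpen V)
    (h : (OmegaLim f {x} ∩ V).Nonempty) : ∃ m, f^[m] x ∈ V := by
  obtain ⟨y, hy, hyV⟩ := h
  obtain ⟨z, hzV, hz⟩ := mem_closure_iff.1 (mem_iInter.1 hy 0) V hV hyV
  simp only [mem_iUnion, image_singleton, mem_singleton_iff] at hz
  obtain ⟨m, -, rfl⟩ := hz
  exact ⟨m, hzV⟩

theorem omegaLim_eq_iInter_closure_image_iterate (f : X → X) (U : Set X) :
    OmegaLim f U = ⋂ n, closure (f^[n] '' ⋃ m, f^[m] '' U) := by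
  refine iInter_congr fun n => congrArg closure (Subset.antisymm ?_ ?_)
  · refine iUnion₂_subset fun m hm => ?_
    rw [← Nat.sub_add_cancel hm, add_comm, iterate_add, image_comp]
    exact image_mono (subset_iUnion (fun k => f^[k] '' U) _)
  · rw [image_iUnion]
    refine iUnion_subset fun k => ?_
    rw [← image_comp, ← iterate_add]
    exact subset_iUnion₂ (s := fun m _ => f^[m] '' U) (n + k) (Nat.le_add_right n k)

theorem antitone_closure_image_iterate (hS : f '' S ⊆ S) :
    Antitone fun n => closure (f^[n] '' S) :=
  antitone_nat_of_succ_le fun n => closure_mono <| by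
    rw [iterate_succ, image_comp]
    exact image_mono hS

variable [CompactSpace X]

theorem nonempty_omegaLim (f : X → X) (hU : U.Nonempty) : (OmegaLim f U).Nonempty := by
  rw [omegaLim_eq_iInter_closure_image_iterate]
  refine IsCompact.nonempty_iInter_of_directed_nonempty_isCompact_isClosed _
    (antitone_closure_image_iterate (image_iUnion_image_iterate_subset f U)).directed_ge
    (fun n => ?_) (fun _ => isClosed_closure.isCompact) (fun _ => isClosed_closure)
  obtain ⟨x, hx⟩ := hU
  exact ⟨f^[n] x, subset_closure ⟨x, mem_iUnion.2 ⟨0, x, hx, rfl⟩, rfl⟩⟩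

theorem image_omegaLim [T2Space X] (hf : Continuous f) (U : Set X) :
    f '' OmegaLim f U = OmegaLim f U := by
  set O := ⋃ m, f^[m] '' U
  have hK : Antitone fun n => closure (f^[n] '' O) :=
    antitone_closure_image_iterate (image_iUnion_image_iterate_subset f U)
  have himage : ∀ n, f '' closure (f^[n] '' O) = closure (f^[n + 1] '' O) := fun n => by
    rw [← hf.isClosedMap.closure_image_eq_of_continuous hf, iterate_succ', image_comp]
  rw [omegaLim_eq_iInter_closure_image_iterate, image_iInter_of_antitone hf hK
    (fun _ => isClosed_closure)]
  simp only [himage]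
  exact hK.iInter_nat_add 1

end OmegaLim

theorem IsCompact.exists_image_iterate_subset {X : Type*} [TopologicalSpace X] {f : X → X}
    {K V : Set X} (hK : IsCompact K) (hf : Continuous f) (hV : f '' V ⊆ V)
    (h : ∀ x ∈ K, ∃ m, f^[m] x ∈ interior V) : ∃ N, f^[N] '' K ⊆ V := by
  have hcover : K ⊆ ⋃ m, f^[m] ⁻¹' interior V := fun x hx => mem_iUnion.2 (h x hx)
  obtain ⟨t, ht⟩ := hK.elim_finite_subcover _
    (fun m => isOpen_interior.preimage (hf.iterate m)) hcover
  refine ⟨t.sup id, ?_⟩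
  rintro _ ⟨x, hx, rfl⟩
  obtain ⟨m, hmt, hmx⟩ := mem_iUnion₂.1 (ht hx)
  rw [← Nat.sub_add_cancel (Finset.le_sup (f := id) hmt), iterate_add_apply]
  exact image_iterate_subset_of_image_subset hV _ ⟨_, interior_subset hmx, rfl⟩

/-- Characterization of attracting neighborhoods of a given
attractor via its dual repeller. -/
theorem attractingNbhd_iff_disjoint_dual
    {X : Type*} [MetricSpace X] [CompactSpace X]
    (f : X → X) (hf : Continuous f) (A : Set X) (hA : IsAttractor f A)
    (U : Set X) :
    (IsAttractingNbhd f U ∧ OmegaLim f U = A) ↔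
      (A ⊆ interior U ∧ closure U ∩ DualRepeller f A = ∅) := by
  obtain ⟨V, hV, rfl⟩ := hA
  have hAV : MaxInv f V ⊆ interior V :=
    hV.subset_interior (image_maxInv f V) (maxInv_subset.trans subset_closure)
  constructor
  · rintro ⟨hU, hωU⟩
    refine ⟨hωU ▸ hU, eq_empty_iff_forall_notMem.2 ?_⟩
    rintro x ⟨hxU, hxdual⟩
    obtain ⟨y, hy⟩ := nonempty_omegaLim f (singleton_nonempty x)
    have hyU : y ∈ OmegaLim f U :=
      omegaLim_closure hf U ▸ omegaLim_mono (singleton_subset_iff.2 hxU) hy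
    exact (eq_empty_iff_forall_notMem.1 hxdual) y ⟨hy, hωU ▸ hyU⟩
  · rintro ⟨hAU, hdisj⟩
    have hentry : ∀ x ∈ closure U, ∃ m, f^[m] x ∈ interior V := fun x hx =>
      exists_iterate_mem_of_omegaLim_inter_nonempty isOpen_interior <|
        (nonempty_iff_ne_empty.2 fun hxdual => hdisj.subset ⟨hx, hxdual⟩).mono
          (inter_subset_inter_right _ hAV)
    obtain ⟨N, hN⟩ := isClosed_closure.isCompact.exists_image_iterate_subset hf hV.1 hentry
    have hωV : OmegaLim f U ⊆ interior V := hV.subset_interior (image_omegaLim hf U)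
      (omegaLim_subset_closure hV.1 ((image_mono subset_closure).trans hN))
    have hωU : OmegaLim f U = MaxInv f V :=
      (subset_maxInv (hωV.trans interior_subset) (image_omegaLim hf U)).antisymm
        (subset_omegaLim (hAU.trans interior_subset) (image_maxInv f V))
    exact ⟨(hωU ▸ hAU : OmegaLim f U ⊆ interior U), hωU⟩
end

section
/- Let X be a compact metric space and f : X → X a continuous map. An invariant set A ⊆ X is an attractor if and only if there exists a compact neighborhood N of A such that there is no backward orbit γ : ℕ → X with γ(0) ∈ N \ A and γ(k) ∈ N for all k ∈ ℕ. Moreover, for such N one has A = Inv(N). -/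
open Set

/-!
If `U` is a trapping region, `f^[n]` maps `cl U` into `U`, so a backward orbit in `cl U` lies
in `U`; together with the forward orbits of its points it spans an invariant subset of `U`, hence
lies in `Inv(U)`.

Conversely let `C = Inv⁺(N)` be the set of points whose forward orbit stays in `N`. By
compactness of the `N`-valued sequences, if arbitrarily long backward `N`-segments end in a
closed set `E`, a full backward `N`-orbit starts in `E`. For `E ⊆ N \ A` this is excluded, so
beyond some length `n` no backward `N`-segment ends in `E`. Taking for `E` the points of `N`
about to leave `int N` shows that a neighbourhood of `A` lies in `C`; then `E = N \ int C` gives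
`f^[n+1] C ⊆ int C`. So `C` is a trapping region, and `Inv(C) = A`.
-/

open Function

section Orbits

variable {X : Type*} {f : X → X}

theorem IsBackwardOrbit.iterate_apply {γ : ℕ → X} (hγ : IsBackwardOrbit f γ) (k j : ℕ) :
    f^[j] (γ (k + j)) = γ k := by
  induction j with
  | zero => rfl
  | succ j ih => rw [iterate_succ_apply, ← add_assoc, hγ, ih]

theorem exists_backwardOrbit_of_image_eq {S : Set X} (hS : f '' S = S) {x : X} (hx : x ∈ S) :
    ∃ γ : ℕ → X, γ 0 = x ∧ IsBackwardOrbit f γ ∧ ∀ k, γ k ∈ S := by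
  have hpre : ∀ y : S, ∃ z : S, f z = y := by
    rintro ⟨y, hy⟩
    rw [← hS] at hy
    obtain ⟨z, hz, rfl⟩ := hy
    exact ⟨⟨z, hz⟩, rfl⟩
  choose g hg using hpre
  refine ⟨fun k => g^[k] ⟨x, hx⟩, rfl, fun k => ?_, fun k => (g^[k] ⟨x, hx⟩).2⟩
  change f (g^[k + 1] _ : X) = _
  rw [iterate_succ_apply']
  exact hg _

theorem subset_maxInv_s11 {A U : Set X} (hA : f '' A = A) (hAU : A ⊆ U) : A ⊆ MaxInv f U :=
  subset_sUnion_of_mem ⟨hAU, hA⟩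

theorem IsBackwardOrbit.mem_maxInv {U : Set X} (hU : f '' U ⊆ U) {γ : ℕ → X}
    (hγ : IsBackwardOrbit f γ) (hγU : ∀ k, γ k ∈ U) : γ 0 ∈ MaxInv f U := by
  -- the full orbit through `γ` is invariant
  let S : Set X := range fun p : ℕ × ℕ => f^[p.1] (γ p.2)
  have hSU : S ⊆ U := by
    rintro _ ⟨⟨j, k⟩, rfl⟩
    exact (mapsTo_iff_image_subset.2 hU).iterate j (hγU k)
  have hSinv : f '' S = S := by
    refine Subset.antisymm ?_ ?_
    · rintro _ ⟨_, ⟨⟨j, k⟩, rfl⟩, rfl⟩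
      exact ⟨(j + 1, k), iterate_succ_apply' f j _⟩
    · rintro _ ⟨⟨j, k⟩, rfl⟩
      refine ⟨f^[j] (γ (k + 1)), ⟨(j, k + 1), rfl⟩, ?_⟩
      rw [← iterate_succ_apply' f, iterate_succ_apply, hγ]
  exact mem_sUnion.2 ⟨S, ⟨hSU, hSinv⟩, ⟨(0, 0), rfl⟩⟩

theorem eq_maxInv_of_not_exists_backwardOrbit {A N : Set X} (hinv : f '' A = A) (hAN : A ⊆ N)
    (hno : ¬ ∃ γ : ℕ → X, IsBackwardOrbit f γ ∧ γ 0 ∈ N \ A ∧ ∀ k : ℕ, γ k ∈ N) :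
    A = MaxInv f N := by
  refine (subset_maxInv_s11 hinv hAN).antisymm ?_
  rintro x ⟨S, ⟨hSN, hSinv⟩, hxS⟩
  by_contra hxA
  obtain ⟨γ, rfl, hγ, hγS⟩ := exists_backwardOrbit_of_image_eq hSinv hxS
  exact hno ⟨γ, hγ, ⟨hSN hxS, hxA⟩, fun k => hSN (hγS k)⟩

theorem forall_iterate_mem_of_forall_le_mem {N : Set X} {n : ℕ}
    (hN : ∀ y, (∀ j ≤ n, f^[j] y ∈ N) → f (f^[n] y) ∈ N) {x : X} (hx : ∀ j ≤ n, f^[j] x ∈ N)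
    (k : ℕ) : f^[k] x ∈ N := by
  suffices h : ∀ m, ∀ j ≤ n + m, f^[j] x ∈ N from h k k (by omega)
  intro m
  induction m with
  | zero => exact hx
  | succ m ih =>
    intro j hj
    rcases Nat.lt_or_eq_of_le hj with hj | rfl
    · exact ih j (by omega)
    have hseg : ∀ i ≤ n, f^[i] (f^[m] x) ∈ N := fun i hi => by
      rw [← iterate_add_apply]
      exact ih _ (by omega)
    have hstep := hN _ hseg
    rwa [← iterate_add_apply, ← iterate_succ_apply' f] at hstep

theorem mem_maxInvPlus_iff {N : Set X} {x : X} : x ∈ MaxInvPlus f N ↔ ∀ k, f^[k] x ∈ N := by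
  constructor
  · rintro ⟨S, ⟨hSN, hS⟩, hxS⟩ k
    exact hSN ((mapsTo_iff_image_subset.2 hS).iterate k hxS)
  · intro hx
    refine mem_sUnion.2 ⟨{y | ∀ k, f^[k] y ∈ N}, ⟨fun y hy => hy 0, ?_⟩, hx⟩
    rintro _ ⟨y, hy, rfl⟩ k
    rw [← iterate_succ_apply]
    exact hy (k + 1)

theorem maxInvPlus_subset (N : Set X) : MaxInvPlus f N ⊆ N :=
  fun _ hx => mem_maxInvPlus_iff.1 hx 0

theorem image_maxInvPlus_subset (N : Set X) : f '' MaxInvPlus f N ⊆ MaxInvPlus f N := by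
  rintro _ ⟨x, hx, rfl⟩
  exact mem_maxInvPlus_iff.2 fun k => by
    rw [← iterate_succ_apply]
    exact mem_maxInvPlus_iff.1 hx (k + 1)

end Orbits

section Topology

variable {X : Type*} [TopologicalSpace X] {f : X → X}

theorem isClosed_maxInvPlus (hf : Continuous f) {N : Set X} (hN : IsClosed N) :
    IsClosed (MaxInvPlus f N) := by
  have : MaxInvPlus f N = ⋂ k, f^[k] ⁻¹' N := by
    ext x
    simp only [mem_maxInvPlus_iff, mem_iInter, mem_preimage]
  rw [this]
  exact isClosed_iInter fun k => hN.preimage (hf.iterate k)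

theorem IsTrappingRegion.maxInv_subset_interior {U : Set X} (hU : IsTrappingRegion f U) :
    MaxInv f U ⊆ interior U := by
  obtain ⟨-, n, -, hn⟩ := hU
  rintro x ⟨S, ⟨hSU, hS⟩, hxS⟩
  have hSn : ∀ m, f^[m] '' S = S := by
    intro m
    induction m with
    | zero => exact image_id S
    | succ m ih => rw [iterate_succ', image_comp, ih, hS]
  rw [← hSn n] at hxS
  exact hn (image_mono (hSU.trans subset_closure) hxS)

theorem IsTrappingRegion.not_exists_backwardOrbit {U : Set X} (hU : IsTrappingRegion f U) :
    ¬ ∃ γ : ℕ → X, IsBackwardOrbit f γ ∧ γ 0 ∈ closure U \ MaxInv f U ∧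
      ∀ k, γ k ∈ closure U := by
  obtain ⟨hfU, n, -, hn⟩ := hU
  rintro ⟨γ, hγ, ⟨-, hγ0⟩, hγU⟩
  have hγU' : ∀ k, γ k ∈ U := fun k => by
    rw [← hγ.iterate_apply k n]
    exact interior_subset (hn (mem_image_of_mem _ (hγU (k + n))))
  exact hγ0 (hγ.mem_maxInv hfU hγU')

theorem exists_backwardOrbit_of_forall_exists_iterate_mem [T2Space X] (hf : Continuous f)
    {N E : Set X} (hN : IsCompact N) (hE : IsClosed E)
    (h : ∀ n, ∃ x, (∀ j ≤ n, f^[j] x ∈ N) ∧ f^[n] x ∈ E) :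
    ∃ γ : ℕ → X, IsBackwardOrbit f γ ∧ γ 0 ∈ E ∧ ∀ k, γ k ∈ N := by
  let K : ℕ → Set (ℕ → X) := fun n =>
    {γ | γ 0 ∈ E ∧ (∀ k, γ k ∈ N) ∧ ∀ k < n, f (γ (k + 1)) = γ k}
  have hK_closed : ∀ n, IsClosed (K n) := fun n => by
    simp only [K, ofPred_and, ofPred_forall]
    exact (hE.preimage (continuous_apply 0)).inter
      ((isClosed_iInter fun k => hN.isClosed.preimage (continuous_apply k)).inter
        (isClosed_iInter fun k => isClosed_iInter fun _ =>
          isClosed_eq (hf.comp (continuous_apply _)) (continuous_apply k)))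
  have hK_anti : ∀ n, K (n + 1) ⊆ K n := fun n γ ⟨h0, hγN, hγ⟩ =>
    ⟨h0, hγN, fun k hk => hγ k (by omega)⟩
  -- the segment `x, f x, …, f^[n] x` read backwards, padded with `x`
  have hK_nonempty : ∀ n, (K n).Nonempty := fun n => by
    obtain ⟨x, hxN, hxE⟩ := h n
    refine ⟨fun k => f^[n - k] x, hxE, fun k => hxN _ (n.sub_le k), fun k hk => ?_⟩
    rw [← iterate_succ_apply' f]
    congr 2
    omega
  have hK_compact : IsCompact (K 0) :=
    (isCompact_pi_infinite fun _ => hN).of_isClosed_subset (hK_closed 0) fun γ hγ => hγ.2.1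
  obtain ⟨γ, hγ⟩ := IsCompact.nonempty_iInter_of_sequence_nonempty_isCompact_isClosed K
    hK_anti hK_nonempty hK_compact hK_closed
  rw [mem_iInter] at hγ
  exact ⟨γ, fun k => (hγ (k + 1)).2.2 k k.lt_succ_self, (hγ 0).1, (hγ 0).2.1⟩

end Topology

section NoBackwardOrbit

variable {X : Type*} [TopologicalSpace X] [T2Space X] {f : X → X} {A N : Set X}

theorem exists_forall_iterate_notMem (hf : Continuous f) (hN : IsCompact N) {E : Set X}
    (hE : IsClosed E) (hEA : E ⊆ N \ A)
    (hno : ¬ ∃ γ : ℕ → X, IsBackwardOrbit f γ ∧ γ 0 ∈ N \ A ∧ ∀ k : ℕ, γ k ∈ N) :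
    ∃ n, ∀ x, (∀ j ≤ n, f^[j] x ∈ N) → f^[n] x ∉ E := by
  by_contra! h
  obtain ⟨γ, hγ, hγE, hγN⟩ := exists_backwardOrbit_of_forall_exists_iterate_mem hf hN hE h
  exact hno ⟨γ, hγ, hEA hγE, hγN⟩

theorem subset_interior_maxInvPlus (hf : Continuous f) (hN : IsCompact N) (hfA : f '' A ⊆ A)
    (hAN : A ⊆ interior N)
    (hno : ¬ ∃ γ : ℕ → X, IsBackwardOrbit f γ ∧ γ 0 ∈ N \ A ∧ ∀ k : ℕ, γ k ∈ N) :
    A ⊆ interior (MaxInvPlus f N) := by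
  have hA : MapsTo f A A := mapsTo_iff_image_subset.2 hfA
  -- no point of `N` that `f` maps out of `int N` ends a backward `N`-segment of length `n`
  obtain ⟨n, hn⟩ := exists_forall_iterate_notMem (E := N \ f ⁻¹' interior N) hf hN
    (hN.isClosed.sdiff (isOpen_interior.preimage hf))
    (fun x hx => ⟨hx.1, fun hxA => hx.2 (hAN (hA hxA))⟩) hno
  let V := ⋂ j ∈ Iic n, f^[j] ⁻¹' interior N
  have hV_open : IsOpen V :=
    (finite_Iic n).isOpen_biInter fun j _ => isOpen_interior.preimage (hf.iterate j)
  have hAV : A ⊆ V := fun a ha => mem_iInter₂.2 fun j _ => hAN (hA.iterate j ha)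
  have hVN : V ⊆ MaxInvPlus f N := fun x hx =>
    mem_maxInvPlus_iff.2 <| forall_iterate_mem_of_forall_le_mem
      (fun y hy => interior_subset (by_contra fun h => hn y hy ⟨hy n le_rfl, h⟩))
      fun j hj => interior_subset (mem_iInter₂.1 hx j hj)
  exact fun a ha => interior_maximal hVN hV_open (hAV ha)

theorem exists_iterate_image_maxInvPlus_subset_interior (hf : Continuous f) (hN : IsCompact N)
    (hA : A ⊆ interior (MaxInvPlus f N))
    (hno : ¬ ∃ γ : ℕ → X, IsBackwardOrbit f γ ∧ γ 0 ∈ N \ A ∧ ∀ k : ℕ, γ k ∈ N) :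
    ∃ n, 1 ≤ n ∧ f^[n] '' MaxInvPlus f N ⊆ interior (MaxInvPlus f N) := by
  obtain ⟨n, hn⟩ := exists_forall_iterate_notMem (E := N \ interior (MaxInvPlus f N)) hf hN
    (hN.isClosed.sdiff isOpen_interior) (fun x hx => ⟨hx.1, fun hxA => hx.2 (hA hxA)⟩) hno
  refine ⟨n + 1, n.succ_pos, ?_⟩
  rintro _ ⟨x, hx, rfl⟩
  have hfx := mem_maxInvPlus_iff.1 (image_maxInvPlus_subset N ⟨x, hx, rfl⟩)
  rw [iterate_succ_apply]
  by_contra h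
  exact hn (f x) (fun j _ => hfx j) ⟨hfx n, h⟩

theorem isAttractor_of_not_exists_backwardOrbit (hf : Continuous f) (hN : IsCompact N)
    (hinv : f '' A = A) (hAN : A ⊆ interior N)
    (hno : ¬ ∃ γ : ℕ → X, IsBackwardOrbit f γ ∧ γ 0 ∈ N \ A ∧ ∀ k : ℕ, γ k ∈ N) :
    IsAttractor f A := by
  have hAC := subset_interior_maxInvPlus hf hN hinv.subset hAN hno
  obtain ⟨n, hn1, hn⟩ := exists_iterate_image_maxInvPlus_subset_interior hf hN hAC hno
  refine ⟨MaxInvPlus f N, ⟨image_maxInvPlus_subset N, n, hn1, ?_⟩, ?_⟩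
  · rwa [(isClosed_maxInvPlus hf hN.isClosed).closure_eq]
  · refine eq_maxInv_of_not_exists_backwardOrbit hinv (hAC.trans interior_subset) ?_
    rintro ⟨γ, hγ, ⟨hγ0, hγ0A⟩, hγC⟩
    exact hno ⟨γ, hγ, ⟨maxInvPlus_subset N hγ0, hγ0A⟩, fun k => maxInvPlus_subset N (hγC k)⟩

end NoBackwardOrbit

/-- An invariant set is an attractor iff it has a compact
neighborhood admitting no backward orbit through the complement of `A`;
moreover `A = Inv(N)` for such `N`. -/
theorem attractor_iff_no_backward_orbit
    {X : Type*} [MetricSpace X] [CompactSpace X]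
    (f : X → X) (hf : Continuous f) (A : Set X) (hinv : f '' A = A) :
    (IsAttractor f A ↔
      ∃ N : Set X, IsCompact N ∧ A ⊆ interior N ∧
        ¬ ∃ γ : ℕ → X, IsBackwardOrbit f γ ∧ γ 0 ∈ N \ A ∧ ∀ k : ℕ, γ k ∈ N) ∧
    (∀ N : Set X, IsCompact N → A ⊆ interior N →
      (¬ ∃ γ : ℕ → X, IsBackwardOrbit f γ ∧ γ 0 ∈ N \ A ∧ ∀ k : ℕ, γ k ∈ N) →
      A = MaxInv f N) := by
  refine ⟨⟨?_, ?_⟩, fun N _ hAN hno =>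
    eq_maxInv_of_not_exists_backwardOrbit hinv (hAN.trans interior_subset) hno⟩
  · rintro ⟨U, hU, rfl⟩
    exact ⟨closure U, isClosed_closure.isCompact,
      hU.maxInv_subset_interior.trans (interior_mono subset_closure), hU.not_exists_backwardOrbit⟩
  · rintro ⟨N, hN, hAN, hno⟩
    exact isAttractor_of_not_exists_backwardOrbit hf hN hinv hAN hno
end
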